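/- arXiv:1411.2102 — 3 statements merged into one kernel-verified Lean document; each statement's English description precedes it below -/
import Mathlib

section
/- Fix K ≥ 1, λ > 0, p_1,…,p_K > 0 with ∑ p_k = 1, μ_1,…,μ_K > 0, μ_0 > 0, and a class k ∈ {1,…,K}. For every n ∈ ℕ^K, the series ∑_{r=0}^{∞} (M_k^r u_k)(n) converges, and its sum P_k(n) satisfies 0 < P_k(n) ≤ 1. -/
open Finset Function

/-- `Λ_k(n) = λ + ∑_ℓ (n_ℓ + δ_{kℓ}) μ_ℓ/(|n|+1) + (|n|+1) μ₀`. -/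
noncomputable def Lam (K : ℕ) (lam mu0 : ℝ) (mu : Fin K → ℝ) (k : Fin K)
    (n : Fin K → ℕ) : ℝ :=
  lam + (∑ l, ((n l : ℝ) + if l = k then 1 else 0) * mu l / ((∑ m, (n m : ℝ)) + 1)) +
    ((∑ m, (n m : ℝ)) + 1) * mu0

/-- The vector `u_k`, with `u_k(n) = μ₀ / Λ_k(n)`. -/
noncomputable def uvec (K : ℕ) (lam mu0 : ℝ) (mu : Fin K → ℝ) (k : Fin K)
    (n : Fin K → ℕ) : ℝ :=
  mu0 / Lam K lam mu0 mu k n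

/-- The operator `M_k` acting on functions on `ℕ^K`:
`(M_k f)(n) = ∑_j (λ p_j/Λ_k(n)) f(n+e_j)
  + ∑_j ((n_j μ_j/(|n|+1) + n_j μ₀)/Λ_k(n)) f(n−e_j)`
(the terms with `n_j = 0` vanish since their coefficient is `0`). -/
noncomputable def Mop (K : ℕ) (lam mu0 : ℝ) (p mu : Fin K → ℝ) (k : Fin K)
    (f : (Fin K → ℕ) → ℝ) : (Fin K → ℕ) → ℝ := fun n =>
  (∑ j, lam * p j / Lam K lam mu0 mu k n * f (update n j (n j + 1))) +
    ∑ j, ((n j : ℝ) * mu j / ((∑ m, (n m : ℝ)) + 1) + (n j : ℝ) * mu0) /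
        Lam K lam mu0 mu k n * f (update n j (n j - 1))

/-!
`M_k` is a positive operator, and comparing its total jump rate with
`Λ_k(n) = λ + ∑_ℓ n_ℓ μ_ℓ/(|n|+1) + μ_k/(|n|+1) + (|n|+1) μ₀` gives `M_k 1 + u_k ≤ 1`.
Hence the partial sums `S_R = ∑_{r<R} M_k^r u_k` satisfy `S_{R+1} = u_k + M_k S_R ≤ u_k + M_k 1 ≤ 1`
by induction and monotonicity of `M_k`. The terms are nonnegative, so the series converges to
a sum at most `1`, which is at least its first term `u_k(n) > 0`.
-/

section QueueOperator

variable {K : ℕ} {lam mu0 : ℝ} {p mu : Fin K → ℝ} {k : Fin K}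

lemma Lam_eq (n : Fin K → ℕ) :
    Lam K lam mu0 mu k n = lam + (∑ l, (n l : ℝ) * mu l / ((∑ m, (n m : ℝ)) + 1)) +
      mu k / ((∑ m, (n m : ℝ)) + 1) + ((∑ m, (n m : ℝ)) + 1) * mu0 := by
  simp only [Lam, add_mul, add_div, Finset.sum_add_distrib, ite_mul, one_mul, zero_mul,
    zero_div, apply_ite (· / ((∑ m, (n m : ℝ)) + 1)), Finset.sum_ite_eq', Finset.mem_univ,
    if_true]
  ring

lemma Lam_pos (hlam : 0 ≤ lam) (hmu0 : 0 < mu0) (hmu : ∀ j, 0 ≤ mu j) (n : Fin K → ℕ) :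
    0 < Lam K lam mu0 mu k n := by
  have hsum : 0 ≤ ∑ l, (n l : ℝ) * mu l / ((∑ m, (n m : ℝ)) + 1) :=
    Finset.sum_nonneg fun l _ => by have := hmu l; positivity
  have hmuk := hmu k
  rw [Lam_eq]
  positivity

lemma uvec_pos (hlam : 0 ≤ lam) (hmu0 : 0 < mu0) (hmu : ∀ j, 0 ≤ mu j) (n : Fin K → ℕ) :
    0 < uvec K lam mu0 mu k n :=
  div_pos hmu0 (Lam_pos hlam hmu0 hmu n)

lemma Mop_mono (hlam : 0 ≤ lam) (hmu0 : 0 < mu0) (hp : ∀ j, 0 ≤ p j) (hmu : ∀ j, 0 ≤ mu j)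
    {f g : (Fin K → ℕ) → ℝ} (hfg : f ≤ g) : Mop K lam mu0 p mu k f ≤ Mop K lam mu0 p mu k g := by
  intro n
  have hL := Lam_pos (k := k) hlam hmu0 hmu n
  unfold Mop
  gcongr with j _ j _
  · exact div_nonneg (mul_nonneg hlam (hp j)) hL.le
  · exact hfg _
  · have := hmu j
    positivity
  · exact hfg _

lemma Mop_nonneg (hlam : 0 ≤ lam) (hmu0 : 0 < mu0) (hp : ∀ j, 0 ≤ p j) (hmu : ∀ j, 0 ≤ mu j)
    {f : (Fin K → ℕ) → ℝ} (hf : 0 ≤ f) : 0 ≤ Mop K lam mu0 p mu k f := by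
  have hzero : Mop K lam mu0 p mu k 0 = 0 := by
    funext n
    simp [Mop]
  simpa [hzero] using Mop_mono (k := k) hlam hmu0 hp hmu hf

lemma Mop_sum {ι : Type*} (s : Finset ι) (f : ι → (Fin K → ℕ) → ℝ) :
    Mop K lam mu0 p mu k (∑ i ∈ s, f i) = ∑ i ∈ s, Mop K lam mu0 p mu k (f i) := by
  funext n
  simp only [Mop, Finset.sum_apply, Finset.mul_sum, Finset.sum_add_distrib]
  congr 1 <;> exact Finset.sum_comm

lemma Mop_one_add_uvec_le (hlam : 0 ≤ lam) (hmu0 : 0 < mu0) (hpsum : ∑ j, p j = 1)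
    (hmu : ∀ j, 0 ≤ mu j) (n : Fin K → ℕ) :
    Mop K lam mu0 p mu k 1 n + uvec K lam mu0 mu k n ≤ 1 := by
  have hL := Lam_pos (k := k) hlam hmu0 hmu n
  set S : ℝ := (∑ m, (n m : ℝ)) + 1 with hS
  have hdeaths : ∑ j, ((n j : ℝ) * mu j / S + (n j : ℝ) * mu0)
      = (∑ j, (n j : ℝ) * mu j / S) + (S - 1) * mu0 := by
    rw [Finset.sum_add_distrib, ← Finset.sum_mul, hS]
    ring
  have hmuk : 0 ≤ mu k / S := div_nonneg (hmu k) (by positivity)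
  simp only [Mop, uvec, Pi.one_apply, mul_one, ← hS]
  rw [← Finset.sum_div, ← Finset.sum_div, ← Finset.mul_sum, hpsum, mul_one, hdeaths,
    ← add_div, ← add_div, div_le_one hL, Lam_eq, ← hS]
  linarith

lemma sum_range_iterate_Mop_uvec_le_one (hlam : 0 ≤ lam) (hmu0 : 0 < mu0) (hp : ∀ j, 0 ≤ p j)
    (hpsum : ∑ j, p j = 1) (hmu : ∀ j, 0 ≤ mu j) (R : ℕ) :
    ∑ r ∈ Finset.range R, (Mop K lam mu0 p mu k)^[r] (uvec K lam mu0 mu k) ≤ 1 := by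
  induction R with
  | zero => simp
  | succ R ih =>
    have hstep : ∑ r ∈ Finset.range (R + 1), (Mop K lam mu0 p mu k)^[r] (uvec K lam mu0 mu k) =
        Mop K lam mu0 p mu k (∑ r ∈ Finset.range R, (Mop K lam mu0 p mu k)^[r]
          (uvec K lam mu0 mu k)) + uvec K lam mu0 mu k := by
      simp only [Finset.sum_range_succ', iterate_succ_apply', iterate_zero_apply, Mop_sum]
    intro n
    calc _ ≤ Mop K lam mu0 p mu k 1 n + uvec K lam mu0 mu k n := by
          rw [hstep, Pi.add_apply]
          gcongr
          exact Mop_mono hlam hmu0 hp hmu ih n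
      _ ≤ 1 := Mop_one_add_uvec_le hlam hmu0 hpsum hmu n

lemma iterate_Mop_nonneg (hlam : 0 ≤ lam) (hmu0 : 0 < mu0) (hp : ∀ j, 0 ≤ p j)
    (hmu : ∀ j, 0 ≤ mu j) {f : (Fin K → ℕ) → ℝ} (hf : 0 ≤ f) (r : ℕ) :
    0 ≤ (Mop K lam mu0 p mu k)^[r] f := by
  induction r with
  | zero => exact hf
  | succ r ih =>
    rw [iterate_succ_apply']
    exact Mop_nonneg hlam hmu0 hp hmu ih

end QueueOperator

theorem stmt5_general (K : ℕ) (lam mu0 : ℝ) (hlam : 0 < lam) (hmu0 : 0 < mu0)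
    (p mu : Fin K → ℝ) (hp : ∀ j, 0 < p j) (hpsum : ∑ j, p j = 1) (hmu : ∀ j, 0 < mu j)
    (k : Fin K) :
    ∀ n : Fin K → ℕ,
      Summable (fun r : ℕ => ((Mop K lam mu0 p mu k)^[r] (uvec K lam mu0 mu k)) n) ∧
      0 < ∑' r : ℕ, ((Mop K lam mu0 p mu k)^[r] (uvec K lam mu0 mu k)) n ∧
      (∑' r : ℕ, ((Mop K lam mu0 p mu k)^[r] (uvec K lam mu0 mu k)) n) ≤ 1 := by
  intro n
  have hp' : ∀ j, 0 ≤ p j := fun j => (hp j).le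
  have hmu' : ∀ j, 0 ≤ mu j := fun j => (hmu j).le
  have hterm (r : ℕ) : 0 ≤ ((Mop K lam mu0 p mu k)^[r] (uvec K lam mu0 mu k)) n :=
    iterate_Mop_nonneg hlam.le hmu0 hp' hmu' (fun m => (uvec_pos hlam.le hmu0 hmu' m).le) r n
  have hpartial (R : ℕ) :
      ∑ r ∈ Finset.range R, ((Mop K lam mu0 p mu k)^[r] (uvec K lam mu0 mu k)) n ≤ 1 := by
    simpa only [Finset.sum_apply, Pi.one_apply] using
      sum_range_iterate_Mop_uvec_le_one hlam.le hmu0 hp' hpsum hmu' R n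
  have hsum := summable_of_sum_range_le hterm hpartial
  refine ⟨hsum, ?_, hsum.tsum_le_of_sum_range_le hpartial⟩
  calc (0 : ℝ) < (Mop K lam mu0 p mu k)^[0] (uvec K lam mu0 mu k) n :=
      uvec_pos hlam.le hmu0 hmu' n
    _ ≤ _ := hsum.le_tsum 0 fun r _ => hterm r

/-- For every state `n ∈ ℕ^K`, the series `∑_{r=0}^∞ (M_k^r u_k)(n)`
converges, and its sum `P_k(n)` satisfies `0 < P_k(n) ≤ 1`. -/
theorem stmt5 (K : ℕ) (hK : 1 ≤ K) (lam mu0 : ℝ) (hlam : 0 < lam) (hmu0 : 0 < mu0)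
    (p mu : Fin K → ℝ) (hp : ∀ j, 0 < p j) (hpsum : ∑ j, p j = 1) (hmu : ∀ j, 0 < mu j)
    (k : Fin K) :
    ∀ n : Fin K → ℕ,
      Summable (fun r : ℕ => ((Mop K lam mu0 p mu k)^[r] (uvec K lam mu0 mu k)) n) ∧
      0 < ∑' r : ℕ, ((Mop K lam mu0 p mu k)^[r] (uvec K lam mu0 mu k)) n ∧
      (∑' r : ℕ, ((Mop K lam mu0 p mu k)^[r] (uvec K lam mu0 mu k)) n) ≤ 1 :=
  stmt5_general K lam mu0 hlam hmu0 p mu hp hpsum hmu k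
end

section
/- Let K ≥ 1, let λ_1,…,λ_K > 0 and μ_1,…,μ_K > 0 satisfy the overload condition ∑_{k=1}^K λ_k/μ_k > 1. Then there exists a unique S > 0 such that ∑_{k=1}^K λ_k/(μ_k + S) = 1; moreover this solution satisfies 0 < S < ∑_{k=1}^K λ_k. -/
open Finset

/-- Under the overload condition `∑_k λ_k/μ_k > 1`, the fixed point
equation `∑_k λ_k/(μ_k + S) = 1` has a unique solution `S > 0`, and moreover any such
solution satisfies `S < ∑_k λ_k`. -/
theorem stmt7 (K : ℕ) (hK : 1 ≤ K) (lam mu : Fin K → ℝ)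
    (hlam : ∀ k, 0 < lam k) (hmu : ∀ k, 0 < mu k)
    (hover : 1 < ∑ k, lam k / mu k) :
    (∃! S : ℝ, 0 < S ∧ ∑ k, lam k / (mu k + S) = 1) ∧
    ∀ S : ℝ, 0 < S → (∑ k, lam k / (mu k + S) = 1) → S < ∑ k, lam k := by
  haveI : Nonempty (Fin K) := ⟨⟨0, hK⟩⟩
  set f : ℝ → ℝ := fun S => ∑ k, lam k / (mu k + S) with hf
  have hne : (Finset.univ : Finset (Fin K)).Nonempty := univ_nonempty
  -- strict antitonicity on [0, ∞)
  have hanti : ∀ x y : ℝ, 0 ≤ x → x < y → f y < f x := by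
    intro x y hx hxy
    apply Finset.sum_lt_sum_of_nonempty hne
    intro k _
    apply div_lt_div_of_pos_left (hlam k) (by linarith [hmu k])
    linarith
  -- bound: any positive solution is < ∑ λ
  have hbound : ∀ S : ℝ, 0 < S → f S = 1 → S < ∑ k, lam k := by
    intro S hS hfS
    have h1 : f S < ∑ k, lam k / S := by
      apply Finset.sum_lt_sum_of_nonempty hne
      intro k _
      apply div_lt_div_of_pos_left (hlam k) hS
      linarith [hmu k]
    rw [hfS, ← Finset.sum_div] at h1
    have := (lt_div_iff₀ hS).mp h1
    linarith
  set L : ℝ := ∑ k, lam k with hL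
  have hLpos : 0 < L := Finset.sum_pos (fun k _ => hlam k) hne
  have hfL : f L < 1 := by
    have h1 : f L < ∑ k, lam k / L := by
      apply Finset.sum_lt_sum_of_nonempty hne
      intro k _
      apply div_lt_div_of_pos_left (hlam k) hLpos
      linarith [hmu k]
    rwa [← Finset.sum_div, ← hL, div_self hLpos.ne'] at h1
  have hf0 : 1 < f 0 := by
    simpa [hf] using hover
  -- continuity on [0, L]
  have hcont : ContinuousOn f (Set.Icc 0 L) := by
    apply continuousOn_finset_sum
    intro k _
    apply continuousOn_const.div (by fun_prop)
    intro x hx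
    have := hx.1
    have := hmu k
    positivity
  -- existence via IVT
  have hIVT := intermediate_value_Ioo' (le_of_lt hLpos) hcont
  have h1mem : (1 : ℝ) ∈ Set.Ioo (f L) (f 0) := ⟨hfL, hf0⟩
  obtain ⟨S, hSmem, hfS⟩ := hIVT h1mem
  refine ⟨⟨S, ⟨hSmem.1, hfS⟩, ?_⟩, hbound⟩
  rintro T ⟨hT, hfT⟩
  by_contra hne'
  rcases lt_or_gt_of_ne hne' with h | h
  · exact absurd (hfT.trans hfS.symm) (hanti T S hT.le h).ne'
  · exact absurd (hfS.trans hfT.symm) (hanti S T hSmem.1.le h).ne'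
end

section
/- Let K ≥ 1, let λ_1,…,λ_K > 0 and μ_1,…,μ_K > 0 satisfy ∑_{k=1}^K λ_k/μ_k > 1, and let S > 0 be the unique solution of ∑_{k=1}^K λ_k/(μ_k + S) = 1. Define Γ_k = ( (μ_k + S) · ∑_{j=1}^K λ_j/(μ_j + S)^2 )^{-1} for each class k. Then for every k: Γ_k > 0, and (min_j μ_j + S)/(μ_k + S) ≤ Γ_k ≤ (max_j μ_j + S)/(μ_k + S); in particular Γ_k ≤ 1 whenever μ_k = max_j μ_j. -/
open Finset

/-- The QoE perturbation metric `Γ_k = ((μ_k + S) ∑_j λ_j/(μ_j + S)²)⁻¹`. -/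
noncomputable def Gamma (K : ℕ) (lam mu : Fin K → ℝ) (S : ℝ) (k : Fin K) : ℝ :=
  ((mu k + S) * ∑ j, lam j / (mu j + S) ^ 2)⁻¹

/-- In overload, with `S > 0` the solution of `∑_k λ_k/(μ_k+S) = 1`,
the QoE perturbation metric `Γ_k = ((μ_k + S) ∑_j λ_j/(μ_j+S)²)⁻¹` is positive and
satisfies `(min_j μ_j + S)/(μ_k + S) ≤ Γ_k ≤ (max_j μ_j + S)/(μ_k + S)`; in particular
`Γ_k ≤ 1` when `μ_k = max_j μ_j`. -/
theorem stmt10 (K : ℕ) (hK : 1 ≤ K) (lam mu : Fin K → ℝ)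
    (hlam : ∀ k, 0 < lam k) (hmu : ∀ k, 0 < mu k)
    (hover : 1 < ∑ k, lam k / mu k)
    (S : ℝ) (hS : 0 < S) (hfix : ∑ k, lam k / (mu k + S) = 1) :
    ∀ k : Fin K,
      0 < Gamma K lam mu S k ∧
      (Finset.univ.inf' ⟨k, Finset.mem_univ k⟩ mu + S) / (mu k + S) ≤ Gamma K lam mu S k ∧
      Gamma K lam mu S k ≤ (Finset.univ.sup' ⟨k, Finset.mem_univ k⟩ mu + S) / (mu k + S) ∧
      (mu k = Finset.univ.sup' ⟨k, Finset.mem_univ k⟩ mu → Gamma K lam mu S k ≤ 1) := by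
  intro k
  have hne : (Finset.univ : Finset (Fin K)).Nonempty := ⟨k, Finset.mem_univ k⟩
  set m := Finset.univ.inf' hne mu with hm
  set M := Finset.univ.sup' hne mu with hM
  have hmuS : ∀ j : Fin K, 0 < mu j + S := fun j => add_pos (hmu j) hS
  have hmpos : 0 < m := by
    obtain ⟨j, _, hj⟩ := Finset.exists_mem_eq_inf' hne mu
    rw [hm, hj]; exact hmu j
  have hmM : m ≤ M := le_trans (Finset.inf'_le _ (Finset.mem_univ k))
      (Finset.le_sup' _ (Finset.mem_univ k))
  have hmS : 0 < m + S := by linarith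
  have hMS : 0 < M + S := by linarith
  set T := ∑ j, lam j / (mu j + S) ^ 2 with hT
  have hTpos : 0 < T :=
    Finset.sum_pos (fun j _ => div_pos (hlam j) (pow_pos (hmuS j) 2)) hne
  have hTub : (m + S) * T ≤ 1 := by
    have h1 : (m + S) * T ≤ ∑ j, lam j / (mu j + S) := by
      rw [Finset.mul_sum]
      apply Finset.sum_le_sum
      intro j _
      have hmj : m + S ≤ mu j + S := by
        have := Finset.inf'_le mu (Finset.mem_univ j)
        rw [← hm] at this
        linarith
      have h2 : (0:ℝ) < (mu j + S) ^ 2 := by have := hmuS j; positivity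
      rw [← mul_div_assoc, div_le_div_iff₀ h2 (hmuS j)]
      nlinarith [hlam j, hmuS j, mul_nonneg (mul_nonneg (hlam j).le (hmuS j).le) (sub_nonneg.mpr hmj)]
    linarith [hfix ▸ h1]
  have hTlb : 1 ≤ (M + S) * T := by
    have h1 : ∑ j, lam j / (mu j + S) ≤ (M + S) * T := by
      rw [Finset.mul_sum]
      apply Finset.sum_le_sum
      intro j _
      have hMj : mu j + S ≤ M + S := by
        have := Finset.le_sup' mu (Finset.mem_univ j)
        rw [← hM] at this
        linarith
      have h2 : (0:ℝ) < (mu j + S) ^ 2 := by have := hmuS j; positivity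
      rw [← mul_div_assoc, div_le_div_iff₀ (hmuS j) h2]
      nlinarith [hlam j, hmuS j, mul_nonneg (mul_nonneg (hlam j).le (hmuS j).le) (sub_nonneg.mpr hMj)]
    linarith [hfix ▸ h1]
  have hkT : 0 < (mu k + S) * T := mul_pos (hmuS k) hTpos
  have hGpos : 0 < Gamma K lam mu S k := by
    unfold Gamma
    rw [← hT]
    exact inv_pos.mpr hkT
  have hGeq : Gamma K lam mu S k = 1 / ((mu k + S) * T) := by
    unfold Gamma; rw [← hT, one_div]
  refine ⟨hGpos, ?_, ?_, ?_⟩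
  · rw [hGeq, div_le_div_iff₀ (hmuS k) hkT]
    have := mul_le_mul_of_nonneg_left hTub (le_of_lt (hmuS k))
    nlinarith [this]
  · rw [hGeq, div_le_div_iff₀ hkT (hmuS k)]
    have := mul_le_mul_of_nonneg_left hTlb (le_of_lt (hmuS k))
    nlinarith [this]
  · intro hk
    rw [hGeq, div_le_one hkT, hk]
    exact hTlb
end
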